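/- If w = (1,b,c) ∈ ℤ³ is a numerical wall datum with first coordinate a = 1 and with j(w) ≥ 0, then b < 0 and 4k²b² < 5h². In particular no such numerical wall datum exists when 4k² ≥ 5h². (Case 2 of the proof of the Main Theorem.) -/

import Mathlib

/-- The Mukai pairing on the algebraic Mukai lattice ℤ³ of a K3 surface `S` with
`Pic(S) = ℤ·H`, `H² = 2Δk²`, identifying `(r, xH, s)` with `(r, x, s)`:
`⟨(r,x,s),(r′,x′,s′)⟩ = 2Δk²xx′ − rs′ − r′s`. -/
def mukaiPair (Δ k : ℤ) (w w' : ℤ × ℤ × ℤ) : ℤ :=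
  2 * Δ * k ^ 2 * w.2.1 * w'.2.1 - w.1 * w'.2.2 - w'.1 * w.2.2

/-- The Mukai vector `v = (1, 0, −Δh²)` of the Hilbert scheme of `Δh²+1` points. -/
def mukaiV (Δ h : ℤ) : ℤ × ℤ × ℤ := (1, 0, -(Δ * h ^ 2))

/-- The slope `Γ = −2Δk²b / (Δh²a + c)` associated to `w = (a,b,c)`. -/
def wallGamma (Δ h k : ℤ) (w : ℤ × ℤ × ℤ) : ℚ :=
  ((-(2 * Δ * k ^ 2 * w.2.1) : ℤ) : ℚ) / ((Δ * h ^ 2 * w.1 + w.2.2 : ℤ) : ℚ)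

/-- `w = (a,b,c) ∈ ℤ³` is a numerical wall datum (for the interior of the movable cone of
`Hilb^{Δh²+1}(S)`) if:
(W1) `Δh²a + c ≠ 0` and `Γ := −2Δk²b/(Δh²a + c)` satisfies `2k²/(h²+k²+1) ≤ Γ < k/h`;
(W2) `Γ·b + a ≥ 0` and `−Γ·b + 1 − a ≥ 0`;
(W3) either `⟨w,w⟩ = −2` and `−Δh² ≤ ⟨w,v⟩ ≤ Δh²`, or `⟨w,w⟩ ≥ 0`, `2⟨w,w⟩ < Δh²` and
     `2⟨w,w⟩ + 1 ≤ ⟨w,v⟩ ≤ Δh²`;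
(W4) `⟨w,v⟩² > 2Δh²·⟨w,w⟩`. -/
def IsWallDatum (Δ h k : ℤ) (w : ℤ × ℤ × ℤ) : Prop :=
  Δ * h ^ 2 * w.1 + w.2.2 ≠ 0 ∧
  (2 * (k : ℚ) ^ 2 / ((h : ℚ) ^ 2 + (k : ℚ) ^ 2 + 1) ≤ wallGamma Δ h k w ∧
    wallGamma Δ h k w < (k : ℚ) / (h : ℚ)) ∧
  (0 ≤ wallGamma Δ h k w * (w.2.1 : ℚ) + (w.1 : ℚ) ∧
    0 ≤ -(wallGamma Δ h k w * (w.2.1 : ℚ)) + 1 - (w.1 : ℚ)) ∧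
  ((mukaiPair Δ k w w = -2 ∧ -(Δ * h ^ 2) ≤ mukaiPair Δ k w (mukaiV Δ h) ∧
      mukaiPair Δ k w (mukaiV Δ h) ≤ Δ * h ^ 2) ∨
    (0 ≤ mukaiPair Δ k w w ∧ 2 * mukaiPair Δ k w w < Δ * h ^ 2 ∧
      2 * mukaiPair Δ k w w + 1 ≤ mukaiPair Δ k w (mukaiV Δ h) ∧
      mukaiPair Δ k w (mukaiV Δ h) ≤ Δ * h ^ 2)) ∧
  (mukaiPair Δ k w (mukaiV Δ h)) ^ 2 > 2 * Δ * h ^ 2 * mukaiPair Δ k w w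

/-! With `Γ = N / D`, `N = −2Δk²b`, `D = Δh² + c`, condition (W2) for `a = 1` reads
`−1 ≤ Γb ≤ 0`. Since `Γ > 0` by (W1), this forces `b < 0`, hence `N > 0` and `D > 0`; clearing the
denominator in `−1 ≤ Γb` gives `2Δk²b² ≤ Δh² + c`, and `j(w) = Δh² − c ≥ 0` bounds the right-hand
side by `2Δh²`. So `k²b² ≤ h²`, which is stronger than `4k²b² < 5h²`. -/

lemma mukaiPair_mukaiV (Δ h k : ℤ) (w : ℤ × ℤ × ℤ) :
    mukaiPair Δ k w (mukaiV Δ h) = Δ * h ^ 2 * w.1 - w.2.2 := by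
  simp only [mukaiPair, mukaiV]
  ring

lemma wallGamma_of_snd_fst_eq_zero (Δ h k a c : ℤ) : wallGamma Δ h k (a, 0, c) = 0 := by
  simp [wallGamma]

namespace IsWallDatum

variable {Δ h k : ℤ}

lemma wallGamma_pos {w : ℤ × ℤ × ℤ} (hw : IsWallDatum Δ h k w) (hk : 0 < k) :
    0 < wallGamma Δ h k w :=
  lt_of_lt_of_le (by positivity) hw.2.1.1

variable {b c : ℤ}

lemma neg_one_le_wallGamma_mul (hw : IsWallDatum Δ h k (1, b, c)) :
    -1 ≤ wallGamma Δ h k (1, b, c) * b := by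
  have := hw.2.2.1.1
  push_cast at this
  linarith

lemma wallGamma_mul_nonpos (hw : IsWallDatum Δ h k (1, b, c)) :
    wallGamma Δ h k (1, b, c) * b ≤ 0 := by
  have := hw.2.2.1.2
  push_cast at this
  linarith

lemma snd_fst_neg (hw : IsWallDatum Δ h k (1, b, c)) (hk : 0 < k) : b < 0 := by
  have hΓ := hw.wallGamma_pos hk
  have hb : (b : ℚ) ≤ 0 := nonpos_of_mul_nonpos_right hw.wallGamma_mul_nonpos hΓ
  have hb0 : b ≠ 0 := by
    rintro rfl
    exact hΓ.ne' (wallGamma_of_snd_fst_eq_zero Δ h k 1 c)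
  exact lt_of_le_of_ne (by exact_mod_cast hb) hb0

lemma wallGamma_denom_pos (hw : IsWallDatum Δ h k (1, b, c)) (hΔ : 0 < Δ) (hk : 0 < k) :
    0 < Δ * h ^ 2 * 1 + c := by
  have hN : (0 : ℚ) < ((-(2 * Δ * k ^ 2 * b) : ℤ) : ℚ) := by
    have := hw.snd_fst_neg hk
    have : 0 < -(2 * Δ * k ^ 2 * b) := by nlinarith [mul_pos hΔ (pow_pos hk 2)]
    exact_mod_cast this
  have hΓ := hw.wallGamma_pos hk
  rw [wallGamma, div_pos_iff_of_pos_left hN] at hΓ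
  exact_mod_cast hΓ

lemma two_mul_mul_sq_le (hw : IsWallDatum Δ h k (1, b, c)) (hΔ : 0 < Δ) (hk : 0 < k) :
    2 * Δ * k ^ 2 * b ^ 2 ≤ Δ * h ^ 2 + c := by
  have hD : (0 : ℚ) < ((Δ * h ^ 2 * 1 + c : ℤ) : ℚ) := by exact_mod_cast hw.wallGamma_denom_pos hΔ hk
  have h1 := hw.neg_one_le_wallGamma_mul
  rw [wallGamma, div_mul_eq_mul_div, le_div_iff₀ hD] at h1
  push_cast at h1
  have : ((2 * Δ * k ^ 2 * b ^ 2 : ℤ) : ℚ) ≤ ((Δ * h ^ 2 + c : ℤ) : ℚ) := by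
    push_cast
    linarith
  exact_mod_cast this

lemma sq_mul_sq_le (hw : IsWallDatum Δ h k (1, b, c)) (hΔ : 0 < Δ) (hk : 0 < k)
    (hj : 0 ≤ mukaiPair Δ k (1, b, c) (mukaiV Δ h)) :
    k ^ 2 * b ^ 2 ≤ h ^ 2 := by
  rw [mukaiPair_mukaiV] at hj
  have := hw.two_mul_mul_sq_le hΔ hk
  have : Δ * (k ^ 2 * b ^ 2) ≤ Δ * h ^ 2 := by linarith
  exact le_of_mul_le_mul_left this hΔ

end IsWallDatum

theorem wall_datum_case_a_eq_one_general (Δ h k : ℤ) (hΔ : 0 < Δ) (hk : 0 < k) :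
    (∀ b c : ℤ, IsWallDatum Δ h k (1, b, c) →
      0 ≤ mukaiPair Δ k (1, b, c) (mukaiV Δ h) →
      b < 0 ∧ 4 * k ^ 2 * b ^ 2 < 5 * h ^ 2) ∧
    (4 * k ^ 2 ≥ 5 * h ^ 2 → ¬ ∃ b c : ℤ, IsWallDatum Δ h k (1, b, c) ∧
      0 ≤ mukaiPair Δ k (1, b, c) (mukaiV Δ h)) := by
  have case_a_eq_one (b c : ℤ) (hw : IsWallDatum Δ h k (1, b, c))
      (hj : 0 ≤ mukaiPair Δ k (1, b, c) (mukaiV Δ h)) :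
      b < 0 ∧ 4 * k ^ 2 * b ^ 2 < 5 * h ^ 2 := by
    have hb := hw.snd_fst_neg hk
    have hle := hw.sq_mul_sq_le hΔ hk hj
    have hpos : 0 < k ^ 2 * b ^ 2 := by
      have := hb.ne
      positivity
    exact ⟨hb, by linarith⟩
  refine ⟨case_a_eq_one, ?_⟩
  rintro hge ⟨b, c, hw, hj⟩
  obtain ⟨hb, hlt⟩ := case_a_eq_one b c hw hj
  have hb2 : 1 ≤ b ^ 2 := by nlinarith
  nlinarith [mul_le_mul_of_nonneg_left hb2 (sq_nonneg k)]

/-- Case 2 of the proof of the Main Theorem: a numerical wall datum with `a = 1` and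
`j(w) ≥ 0` satisfies `b < 0` and `4k²b² < 5h²`; in particular none exists when `4k² ≥ 5h²`. -/
theorem wall_datum_case_a_eq_one (Δ h k : ℤ) (hΔ : 0 < Δ) (hh : 0 < h) (hk : 0 < k)
    (hgcd : Int.gcd h k = 1) :
    (∀ b c : ℤ, IsWallDatum Δ h k (1, b, c) →
      0 ≤ mukaiPair Δ k (1, b, c) (mukaiV Δ h) →
      b < 0 ∧ 4 * k ^ 2 * b ^ 2 < 5 * h ^ 2) ∧
    (4 * k ^ 2 ≥ 5 * h ^ 2 → ¬ ∃ b c : ℤ, IsWallDatum Δ h k (1, b, c) ∧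
      0 ≤ mukaiPair Δ k (1, b, c) (mukaiV Δ h)) :=
  wall_datum_case_a_eq_one_general Δ h k hΔ hk
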